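/- In a group G, for s,t ∈ G we have s ∼_s t if and only if st⁻¹ belongs to the commutator subgroup [G,G]. Moreover s ∼_s t if and only if s ∼_s^1 t. -/

import Mathlib

/-- `s ∼ₛ¹ t`: `s = p₁⋯pₙ` and `t = p_{f(1)}⋯p_{f(n)}` for some `p_i ∈ S¹` and a
permutation `f` of `{1,…,n}` (encoded as a list permutation). -/
def SimS1 {S : Type*} [Semigroup S] (s t : S) : Prop :=
  ∃ l l' : List (WithOne S), l.Perm l' ∧ (s : WithOne S) = l.prod ∧ (t : WithOne S) = l'.prod

/-- `∼ₛ`: the transitive closure of `∼ₛ¹`. -/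
def SimS {S : Type*} [Semigroup S] : S → S → Prop := Relation.TransGen SimS1

/-!
Rearranging the factors of a product does not change its image in the abelianization, so
`s ∼ₛ t` forces `s t⁻¹ ∈ [G,G]`. Conversely `∼ₛ¹` is compatible with multiplication and
`⁅g, h⁆ = g h g⁻¹ h⁻¹ ∼ₛ¹ g g⁻¹ h h⁻¹ = 1`, so every `c ∈ [G,G]` satisfies `c ∼ₛ¹ 1`, whence
`s = (s t⁻¹) t ∼ₛ¹ t`: a single rearrangement already suffices.
-/

namespace SimS1

variable {S : Type*} [Semigroup S]

theorem refl (s : S) : SimS1 s s :=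
  ⟨[(s : WithOne S)], [(s : WithOne S)], List.Perm.refl _, by simp, by simp⟩

theorem mul {a b s t : S} (hab : SimS1 a b) (hst : SimS1 s t) : SimS1 (a * s) (b * t) := by
  obtain ⟨l₁, l₁', hperm₁, ha, hb⟩ := hab
  obtain ⟨l₂, l₂', hperm₂, hs, ht⟩ := hst
  exact ⟨l₁ ++ l₂, l₁' ++ l₂', hperm₁.append hperm₂,
    by rw [WithOne.coe_mul, List.prod_append, ha, hs],
    by rw [WithOne.coe_mul, List.prod_append, hb, ht]⟩

theorem map_eq {M : Type*} [CommMonoid M] (f : S →ₙ* M) {s t : S} (h : SimS1 s t) :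
    f s = f t := by
  obtain ⟨l, l', hperm, hs, ht⟩ := h
  rw [← WithOne.lift_coe f s, ← WithOne.lift_coe f t, hs, ht, map_list_prod, map_list_prod]
  exact (hperm.map _).prod_eq

end SimS1

theorem SimS.map_eq {S M : Type*} [Semigroup S] [CommMonoid M] (f : S →ₙ* M) {s t : S}
    (h : SimS s t) : f s = f t := by
  induction h with
  | single hst => exact hst.map_eq f
  | tail _ hst ih => exact ih.trans (hst.map_eq f)

section Group

open scoped commutatorElement

variable {G : Type*} [Group G]

theorem simS1_commutatorElement_one (g h : G) : SimS1 ⁅g, h⁆ 1 := by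
  refine ⟨[(g : WithOne G), h, (g⁻¹ : G), (h⁻¹ : G)], [(g : WithOne G), (g⁻¹ : G), h, (h⁻¹ : G)],
    List.Perm.cons _ (List.Perm.swap _ _ _), ?_, ?_⟩
  · simp only [List.prod_cons, List.prod_nil, mul_one, ← WithOne.coe_mul, commutatorElement_def,
      mul_assoc]
  · simp only [List.prod_cons, List.prod_nil, mul_one, ← WithOne.coe_mul, mul_inv_cancel]

theorem simS1_one_of_mem_commutator {c : G} (hc : c ∈ commutator G) : SimS1 c 1 := by
  rw [commutator_eq_closure] at hc
  induction hc using Subgroup.closure_induction'' with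
  | mem _ hx =>
    obtain ⟨g, h, rfl⟩ := hx
    exact simS1_commutatorElement_one g h
  | inv_mem _ hx =>
    obtain ⟨g, h, rfl⟩ := hx
    rw [commutatorElement_inv]
    exact simS1_commutatorElement_one h g
  | one => exact SimS1.refl 1
  | mul _ _ _ _ hx hy => simpa only [mul_one] using hx.mul hy

theorem simS1_of_mul_inv_mem_commutator {s t : G} (h : s * t⁻¹ ∈ commutator G) : SimS1 s t := by
  simpa only [inv_mul_cancel_right, one_mul] using (simS1_one_of_mem_commutator h).mul (.refl t)

theorem Abelianization.of_eq_of_iff {s t : G} :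
    Abelianization.of s = Abelianization.of t ↔ s * t⁻¹ ∈ commutator G := by
  rw [← div_eq_mul_inv]
  exact QuotientGroup.eq_iff_div_mem

theorem SimS.mul_inv_mem_commutator {s t : G} (h : SimS s t) : s * t⁻¹ ∈ commutator G :=
  Abelianization.of_eq_of_iff.mp (h.map_eq Abelianization.of.toMulHom)

end Group

/-- In a group `G`: `s ∼ₛ t` iff `s * t⁻¹ ∈ [G,G]`, and `s ∼ₛ t` iff `s ∼ₛ¹ t`. -/
theorem group_simS_iff_commutator {G : Type*} [Group G] (s t : G) :
    (SimS s t ↔ s * t⁻¹ ∈ commutator G) ∧ (SimS s t ↔ SimS1 s t) :=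
  ⟨⟨SimS.mul_inv_mem_commutator, fun h => .single (simS1_of_mul_inv_mem_commutator h)⟩,
    ⟨fun h => simS1_of_mul_inv_mem_commutator h.mul_inv_mem_commutator, .single⟩⟩
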